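/- For every nonzero symmetric traceless real 3×3 matrix Q one has 0 ≤ 6 (tr Q³)² ≤ (tr Q²)³; equivalently, the biaxiality parameter β(Q) := 1 − 6 (tr Q³)²/(tr Q²)³ satisfies 0 ≤ β(Q) ≤ 1. -/
import Mathlib


open Matrix

noncomputable section

/-- The space of Q-tensors: 3×3 real matrices; membership in S₀ is expressed by the
symmetry and tracelessness hypotheses below. -/
abbrev M3 : Type := Matrix (Fin 3) (Fin 3) ℝ

/-- The biaxiality parameter β(Q) = 1 − 6 (tr Q³)² / (tr Q²)³. -/
def beta (Q : M3) : ℝ := 1 - 6 * ((Q * Q * Q).trace) ^ 2 / ((Q * Q).trace) ^ 3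

lemma trace_pow_eq_aux (Q U : M3) (μ : Fin 3 → ℝ) (hU : star U * U = 1)
    (hU' : U * star U = 1) (hD : Q = U * diagonal μ * star U) (k : ℕ) :
    (Q ^ k).trace = ∑ i, μ i ^ k := by
  have hpow : Q ^ k = U * (diagonal μ) ^ k * star U := by
    induction k with
    | zero => simpa using hU'.symm
    | succ n ih =>
      rw [pow_succ, ih, pow_succ]
      conv_lhs => rw [hD]
      simp only [Matrix.mul_assoc]
      rw [← Matrix.mul_assoc (star U) U, hU, Matrix.one_mul]
  rw [hpow, Matrix.trace_mul_cycle, hU, Matrix.one_mul,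
    Matrix.diagonal_pow, Matrix.trace_diagonal]
  simp

lemma trace_pow_eq (Q : M3) (hA : Q.IsHermitian) (k : ℕ) :
    (Q ^ k).trace = ∑ i, (hA.eigenvalues i) ^ k :=
  trace_pow_eq_aux Q (hA.eigenvectorUnitary : Matrix (Fin 3) (Fin 3) ℝ) hA.eigenvalues
    (Matrix.mem_unitaryGroup_iff'.mp hA.eigenvectorUnitary.2)
    (Matrix.mem_unitaryGroup_iff.mp hA.eigenvectorUnitary.2)
    (by simpa using hA.spectral_theorem) k

/-- For every nonzero symmetric traceless real 3×3 matrix Q one has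
0 ≤ 6 (tr Q³)² ≤ (tr Q²)³, equivalently 0 ≤ β(Q) ≤ 1. -/
theorem stmt0 (Q : M3) (hsymm : Qᵀ = Q) (htr : Q.trace = 0) (hQ : Q ≠ 0) :
    0 ≤ 6 * ((Q * Q * Q).trace) ^ 2 ∧
    6 * ((Q * Q * Q).trace) ^ 2 ≤ ((Q * Q).trace) ^ 3 ∧
    0 ≤ beta Q ∧ beta Q ≤ 1 := by
  have hA : Q.IsHermitian := by
    rw [Matrix.IsHermitian]
    ext i j
    rw [Matrix.conjTranspose_apply, star_trivial]
    exact congrFun (congrFun hsymm i) j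
  set x := hA.eigenvalues 0 with hx
  set y := hA.eigenvalues 1 with hy
  set z := hA.eigenvalues 2 with hz0
  have h1 : x + y + z = 0 := by
    have := trace_pow_eq Q hA 1
    rw [pow_one] at this
    rw [htr] at this
    rw [Fin.sum_univ_three] at this
    simpa using this.symm
  have h2 : (Q * Q).trace = x ^ 2 + y ^ 2 + z ^ 2 := by
    have := trace_pow_eq Q hA 2
    rw [Fin.sum_univ_three] at this
    rw [← this, pow_two]
  have h3 : (Q * Q * Q).trace = x ^ 3 + y ^ 3 + z ^ 3 := by
    have := trace_pow_eq Q hA 3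
    rw [Fin.sum_univ_three] at this
    rw [← this, pow_succ, pow_two]
  have hne : ¬(x = 0 ∧ y = 0 ∧ z = 0) := by
    rintro ⟨ha, hb, hc⟩
    apply hQ
    have hev : hA.eigenvalues = fun _ => (0:ℝ) := by
      funext i
      fin_cases i <;> assumption
    have hsp := hA.spectral_theorem
    rw [hev] at hsp
    simpa using hsp
  have ht2 : 0 < (Q * Q).trace := by
    rw [h2]
    rcases not_and_or.mp hne with h | h
    · nlinarith [sq_nonneg y, sq_nonneg z, sq_nonneg x, pow_pos (abs_pos.mpr h) 2, sq_abs x]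
    rcases not_and_or.mp (by tauto : ¬(y = 0 ∧ z = 0)) with h' | h'
    · nlinarith [sq_nonneg y, sq_nonneg z, sq_nonneg x, pow_pos (abs_pos.mpr h') 2, sq_abs y]
    · nlinarith [sq_nonneg y, sq_nonneg z, sq_nonneg x, pow_pos (abs_pos.mpr h') 2, sq_abs z]
  have key : 6 * ((Q * Q * Q).trace) ^ 2 ≤ ((Q * Q).trace) ^ 3 := by
    rw [h2, h3]
    have hz : z = -x - y := by linarith
    rw [hz]
    nlinarith [sq_nonneg ((x - y) * (2 * x + y) * (x + 2 * y))]
  have h6 : (0:ℝ) ≤ 6 * ((Q * Q * Q).trace) ^ 2 := by positivity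
  have ht2c : (0:ℝ) < ((Q * Q).trace) ^ 3 := by positivity
  refine ⟨h6, key, ?_, ?_⟩
  · rw [beta]
    have : 6 * ((Q * Q * Q).trace) ^ 2 / ((Q * Q).trace) ^ 3 ≤ 1 :=
      (div_le_one ht2c).mpr key
    linarith
  · rw [beta]
    have : 0 ≤ 6 * ((Q * Q * Q).trace) ^ 2 / ((Q * Q).trace) ^ 3 :=
      div_nonneg h6 ht2c.le
    linarith
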